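/- Let A = (a_{i+j-1}) be an n×n Hankel matrix over a field F and 1 ≤ k ≤ n-1 with the leading principal submatrix A_k nonsingular. Let x = (x_1,...,x_k) be the unique solution of A_k x^T = (a_{k+1},...,a_{2k})^T. Then A_d is singular for all d with k < d ≤ n if and only if a_{k+t} = x_1 a_t + x_2 a_{t+1} + ... + x_k a_{t+k-1} holds for all t = 1,...,n. -/

import Mathlib

/-!
Write `c r = a (r + 1)` and let `δ r = c (r + k) - ∑ s, x s * c (r + s)` measure how far the
recurrence defined by `x` fails at `r`. Subtracting from every row `i ≥ k` of the Hankel matrix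
`H_t = (c (i + j))` the `x`-combination of the `k` rows above it does not change the determinant
and leaves `(δ (i - k + j))` in those rows. If `δ` vanishes below `k + t - 1`, the result is block
upper triangular, so `det H_{k+t} = det H_k * det (δ (k + i + j))`. When `δ` vanishes on all of
`[0, k + t)` the second factor has a zero row; when `δ` first fails at `k + t - 1`, that factor is a
Hankel matrix vanishing above its antidiagonal with nonzero antidiagonal, hence nonsingular.
-/

open Matrix Finset

section Hankel

variable {R : Type*} [CommRing R]

def hankel (m : ℕ) (c : ℕ → R) : Matrix (Fin m) (Fin m) R :=
  Matrix.of fun i j => c (i + j)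

def recurrenceDefect {k : ℕ} (x : Fin k → R) (c : ℕ → R) (r : ℕ) : R :=
  c (r + k) - ∑ s, x s * c (r + s)

theorem det_hankel_succ_ne_zero [NoZeroDivisors R] {m : ℕ} {c : ℕ → R}
    (hzero : ∀ r < m, c r = 0) (hne : c m ≠ 0) : (hankel (m + 1) c).det ≠ 0 := by
  set U := (hankel (m + 1) c).submatrix Fin.revPerm id
  have hU : U.IsUpperTriangular := by
    intro i j hij
    have : (j : ℕ) < i := hij
    simp only [U, submatrix_apply, hankel, of_apply, Fin.revPerm_apply, Fin.val_rev, id]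
    exact hzero _ (by omega)
  have hdiag : ∀ i, U i i = c m := by
    intro i
    simp only [U, submatrix_apply, hankel, of_apply, Fin.revPerm_apply, Fin.val_rev, id]
    congr 1
    omega
  intro h
  have hdet := det_permute Fin.revPerm (hankel (m + 1) c)
  rw [h, mul_zero, det_of_isUpperTriangular hU] at hdet
  simp [hdiag, hne] at hdet

variable {k : ℕ} (x : Fin k → R)

def recurrenceShift (t : ℕ) : Matrix (Fin t) (Fin t) R :=
  Matrix.of fun i l =>
    if k ≤ (i : ℕ) then ∑ s : Fin k, if (l : ℕ) = i - k + s then x s else 0 else 0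

theorem recurrenceShift_apply_of_le {t : ℕ} {i l : Fin t} (hil : i ≤ l) :
    recurrenceShift x t i l = 0 := by
  have : (i : ℕ) ≤ l := hil
  simp only [recurrenceShift, of_apply]
  split_ifs
  · exact sum_eq_zero fun s _ => if_neg (by omega)
  · rfl

theorem det_one_sub_recurrenceShift (t : ℕ) : (1 - recurrenceShift x t).det = 1 := by
  rw [det_of_isLowerTriangular]
  · simp [recurrenceShift_apply_of_le]
  · intro i j hij
    have hij : i < j := hij
    rw [Matrix.sub_apply, one_apply_ne hij.ne, recurrenceShift_apply_of_le x hij.le, sub_zero]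

theorem recurrenceShift_mul_hankel_apply {t : ℕ} (c : ℕ → R) (i j : Fin t) :
    (recurrenceShift x t * hankel t c) i j =
      if k ≤ (i : ℕ) then ∑ s, x s * c (i - k + s + j) else 0 := by
  simp only [mul_apply, recurrenceShift, hankel, of_apply]
  split_ifs with hki
  · simp only [sum_mul, ite_mul, zero_mul]
    rw [sum_comm]
    refine sum_congr rfl fun s _ => ?_
    rw [Fin.sum_univ_eq_sum_range (fun l => if l = (i : ℕ) - k + s then x s * c (l + j) else 0),
      sum_ite_eq', if_pos (mem_range.2 (by omega))]
  · simp

theorem one_sub_recurrenceShift_mul_hankel_apply {t : ℕ} (c : ℕ → R) (i j : Fin t) :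
    ((1 - recurrenceShift x t) * hankel t c) i j =
      if k ≤ (i : ℕ) then recurrenceDefect x c (i - k + j) else c (i + j) := by
  rw [sub_mul, one_mul, Matrix.sub_apply, recurrenceShift_mul_hankel_apply]
  split_ifs with hki
  · simp only [hankel, of_apply, recurrenceDefect]
    rw [show (i : ℕ) - k + j + k = i + j by omega]
    congr 1
    exact sum_congr rfl fun s _ => by ring_nf
  · simp [hankel]

theorem det_hankel_add (c : ℕ → R) (m : ℕ)
    (h : ∀ r < k + m - 1, recurrenceDefect x c r = 0) :
    (hankel (k + m) c).det =
      (hankel k c).det * (hankel m fun r => recurrenceDefect x c (k + r)).det := by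
  have hblocks : ((1 - recurrenceShift x (k + m)) * hankel (k + m) c).submatrix finSumFinEquiv
      finSumFinEquiv = fromBlocks (hankel k c) (of fun (i : Fin k) (j : Fin m) => c (i + (k + j)))
        0 (hankel m fun r => recurrenceDefect x c (k + r)) := by
    ext (i | i) (j | j) <;>
      simp only [submatrix_apply, finSumFinEquiv_apply_left, finSumFinEquiv_apply_right,
        one_sub_recurrenceShift_mul_hankel_apply, Fin.val_castAdd, Fin.val_natAdd,
        fromBlocks_apply₁₁, fromBlocks_apply₁₂, fromBlocks_apply₂₁, fromBlocks_apply₂₂,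
        Matrix.zero_apply]
    · rw [if_neg (by omega)]; rfl
    · rw [if_neg (by omega)]; rfl
    · rw [if_pos (by omega)]; exact h _ (by omega)
    · rw [if_pos (by omega)]; simp only [hankel, of_apply]; congr 1; omega
  calc (hankel (k + m) c).det = ((1 - recurrenceShift x (k + m)) * hankel (k + m) c).det := by
        rw [det_mul, det_one_sub_recurrenceShift, one_mul]
    _ = _ := by rw [← det_submatrix_equiv_self finSumFinEquiv, hblocks, det_fromBlocks_zero₂₁]

theorem forall_det_hankel_eq_zero_iff [NoZeroDivisors R] {n : ℕ} (c : ℕ → R)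
    (hc : (hankel k c).det ≠ 0) (hx : ∀ r < k, recurrenceDefect x c r = 0) :
    (∀ d, k < d → d ≤ n → (hankel d c).det = 0) ↔ ∀ r < n, recurrenceDefect x c r = 0 := by
  constructor
  · intro hsing r
    induction r using Nat.strong_induction_on with
    | _ r ih =>
      intro hrn
      by_contra hr
      obtain ⟨m, rfl⟩ : ∃ m, r = k + m :=
        Nat.exists_eq_add_of_le (le_of_not_gt fun hrk => hr (hx r hrk))
      have hdet := det_hankel_add x c (m + 1) fun r hr => ih r (by omega) (by omega)
      rw [hsing _ (by omega) (by omega)] at hdet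
      exact mul_ne_zero hc (det_hankel_succ_ne_zero (fun r hr => ih _ (by omega) (by omega)) hr)
        hdet.symm
  · intro hzero d hkd hdn
    obtain ⟨m, rfl⟩ : ∃ m, d = k + m := Nat.exists_eq_add_of_le hkd.le
    rw [det_hankel_add x c m fun r hr => hzero r (by omega)]
    exact mul_eq_zero_of_right _ <|
      det_eq_zero_of_row_eq_zero ⟨0, by omega⟩ fun j => hzero _ (by simp; omega)

theorem recurrenceDefect_succ_eq_zero_iff (a : ℕ → R) (r : ℕ) :
    recurrenceDefect x (fun r => a (r + 1)) r = 0 ↔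
      a (k + (r + 1)) = ∑ s, x s * a (r + 1 + s) := by
  rw [recurrenceDefect, sub_eq_zero]
  ring_nf

end Hankel

theorem hankel_delta_eq_iff_general (F : Type*) [Field F] (n k : ℕ)
    (hk : k ≤ n) (a : ℕ → F) (A : Matrix (Fin n) (Fin n) F)
    (hA : ∀ i j : Fin n, A i j = a ((i : ℕ) + (j : ℕ) + 1))
    (hAk : (A.submatrix (Fin.castLE hk) (Fin.castLE hk)).det ≠ 0)
    (x : Fin k → F)
    (hx : ∀ t : ℕ, 1 ≤ t → t ≤ k → a (k + t) = ∑ s : Fin k, x s * a (t + (s : ℕ))) :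
    (∀ (d : ℕ) (hd : d ≤ n), k < d →
        (A.submatrix (Fin.castLE hd) (Fin.castLE hd)).det = 0)
      ↔ ∀ t : ℕ, 1 ≤ t → t ≤ n → a (k + t) = ∑ s : Fin k, x s * a (t + (s : ℕ)) := by
  have hsub : ∀ d (hd : d ≤ n),
      A.submatrix (Fin.castLE hd) (Fin.castLE hd) = hankel d fun r => a (r + 1) := by
    intro d hd
    ext i j
    simp [hA, hankel, add_assoc]
  rw [hsub] at hAk
  have key := forall_det_hankel_eq_zero_iff (n := n) x _ hAk fun r hr =>
    (recurrenceDefect_succ_eq_zero_iff x a r).2 (hx (r + 1) (by omega) hr)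
  simp only [hsub, recurrenceDefect_succ_eq_zero_iff] at key ⊢
  constructor
  · intro h t ht1 htn
    obtain ⟨r, rfl⟩ := Nat.exists_eq_add_of_le' ht1
    exact key.1 (fun d hkd hdn => h d hdn hkd) r htn
  · intro h d hdn hkd
    exact key.2 (fun r hr => h (r + 1) (by omega) hr) d hkd hdn

/-- Let `A` be an `n × n` Hankel matrix with `(i,j)` entry `a_{i+j-1}` (1-based), let
`1 ≤ k ≤ n - 1` with the leading principal submatrix `A_k` nonsingular, and let
`x = (x_1, ..., x_k)` solve `A_k xᵀ = (a_{k+1}, ..., a_{2k})ᵀ`, i.e.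
`a_{k+t} = ∑_{s=1}^k x_s a_{t+s-1}` for `t = 1, ..., k`.  Then `A_d` is singular for all
`k < d ≤ n` iff this relation holds for all `t = 1, ..., n`. -/
theorem hankel_delta_eq_iff (F : Type*) [Field F] (n k : ℕ) (hk1 : 1 ≤ k)
    (hkn : k ≤ n - 1) (hk : k ≤ n) (a : ℕ → F) (A : Matrix (Fin n) (Fin n) F)
    (hA : ∀ i j : Fin n, A i j = a ((i : ℕ) + (j : ℕ) + 1))
    (hAk : (A.submatrix (Fin.castLE hk) (Fin.castLE hk)).det ≠ 0)
    (x : Fin k → F)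
    (hx : ∀ t : ℕ, 1 ≤ t → t ≤ k → a (k + t) = ∑ s : Fin k, x s * a (t + (s : ℕ))) :
    (∀ (d : ℕ) (hd : d ≤ n), k < d →
        (A.submatrix (Fin.castLE hd) (Fin.castLE hd)).det = 0)
      ↔ ∀ t : ℕ, 1 ≤ t → t ≤ n → a (k + t) = ∑ s : Fin k, x s * a (t + (s : ℕ)) :=
  hankel_delta_eq_iff_general F n k hk a A hA hAk x hx
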